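/- Let d ≥ 2, ν > d real, and ρ > 2√d real. Then Σ_{h ∈ ℤ^d, |h| ≥ ρ} 1/|h|^ν ≤ (2 π^{d/2}/Γ(d/2)) · Σ_{i=0}^{d-1} C(d-1, i) · d^{(d-1-i)/2} / ((ν-1-i)(ρ - 2√d)^{ν-1-i}). -/

import Mathlib

open scoped BigOperators

/-- Euclidean norm of a lattice point of `ℤ^d`. -/
noncomputable def latNorm {d : ℕ} (h : Fin d → ℤ) : ℝ :=
  Real.sqrt (∑ i, ((h i : ℝ)) ^ 2)

/-!
Attach to every lattice point `h` with `|h| ≥ ρ` the unit cube `h + [0,1)^d`. Its points `x`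
satisfy `|x - h| ≤ √d`, hence `|x| ≥ ρ - √d` and `|h|^{-ν} ≤ (|x| - √d)^{-ν}`. The cubes are
disjoint of volume one, so the sum is at most `∫_{|x| ≥ ρ - √d} (|x| - √d)^{-ν} dx`. In polar
coordinates this is the area `2π^{d/2}/Γ(d/2)` of the unit sphere times
`∫_{ρ-√d}^∞ r^{d-1} (r - √d)^{-ν} dr`, which after the shift `t = r - √d` and the binomial
expansion of `(t + √d)^{d-1}` is the sum of the elementary integrals `∫_{ρ-2√d}^∞ t^{i-ν} dt`.
-/

open MeasureTheory Set Metric Module ENNReal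

section Polar

variable {E : Type*} [NormedAddCommGroup E] [NormedSpace ℝ E] [FiniteDimensional ℝ E]
  [MeasurableSpace E] [BorelSpace E] [Nontrivial E] (μ : Measure E) [μ.IsAddHaarMeasure]

theorem lintegral_fun_norm_addHaar {g : ℝ → ℝ≥0∞} (hg : Measurable g) :
    ∫⁻ x, g ‖x‖ ∂μ =
      μ.toSphere univ * ∫⁻ y in Ioi (0 : ℝ), ENNReal.ofReal (y ^ (finrank ℝ E - 1)) * g y :=
  calc ∫⁻ x, g ‖x‖ ∂μ = ∫⁻ x : ({0}ᶜ : Set E), g ‖x.1‖ ∂(μ.comap (↑)) := by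
        rw [lintegral_subtype_comap (measurableSet_singleton _).compl (fun x => g ‖x‖),
          restrict_compl_singleton]
    _ = ∫⁻ p, g p.2 ∂(μ.toSphere.prod (.volumeIoiPow (finrank ℝ E - 1))) := by
        simpa using (μ.measurePreserving_homeomorphUnitSphereProd.lintegral_comp_emb
          (Homeomorph.measurableEmbedding _) (g ∘ Subtype.val ∘ Prod.snd))
    _ = μ.toSphere univ * ∫⁻ y, g y ∂(.volumeIoiPow (finrank ℝ E - 1)) := by
        rw [lintegral_prod _ (by fun_prop)]
        simp [mul_comm]
    _ = _ := by
        rw [Measure.volumeIoiPow, lintegral_withDensity_eq_lintegral_mul _ (by fun_prop)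
          (by fun_prop)]
        exact congrArg _ (lintegral_subtype_comap measurableSet_Ioi
          fun y => ENNReal.ofReal (y ^ (finrank ℝ E - 1)) * g y)

theorem setLIntegral_fun_norm_addHaar_Ici {c : ℝ} (hc : 0 < c) {g : ℝ → ℝ≥0∞}
    (hg : Measurable g) :
    ∫⁻ x in {x | c ≤ ‖x‖}, g ‖x‖ ∂μ =
      μ.toSphere univ * ∫⁻ y in Ici c, ENNReal.ofReal (y ^ (finrank ℝ E - 1)) * g y := by
  have hIci : MeasurableSet (Ici c) := measurableSet_Ici
  rw [← lintegral_indicator (measurableSet_le measurable_const measurable_norm)]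
  calc ∫⁻ x, {x | c ≤ ‖x‖}.indicator (fun x => g ‖x‖) x ∂μ
      = ∫⁻ x, (Ici c).indicator g ‖x‖ ∂μ :=
        lintegral_congr fun _ => indicator_comp_right fun x : E => ‖x‖
    _ = μ.toSphere univ * ∫⁻ y in Ioi (0 : ℝ),
          (Ici c).indicator (fun y => ENNReal.ofReal (y ^ (finrank ℝ E - 1)) * g y) y := by
        rw [lintegral_fun_norm_addHaar μ (hg.indicator hIci)]
        simp only [indicator_mul_right]
    _ = _ := by
        rw [lintegral_indicator hIci, Measure.restrict_restrict hIci,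
          inter_eq_left.2 (Ici_subset_Ioi.2 hc)]

end Polar

theorem EuclideanSpace.volume_toSphere_univ (ι : Type*) [Fintype ι] [Nonempty ι] :
    (volume : Measure (EuclideanSpace ℝ ι)).toSphere univ =
      ENNReal.ofReal (2 * Real.pi ^ ((Fintype.card ι : ℝ) / 2) /
        Real.Gamma ((Fintype.card ι : ℝ) / 2)) := by
  have hn : (0 : ℝ) < Fintype.card ι := by exact_mod_cast Fintype.card_pos
  rw [Measure.toSphere_apply_univ, finrank_euclideanSpace, EuclideanSpace.volume_ball,
    ENNReal.ofReal_one, one_pow, one_mul, ← ENNReal.ofReal_natCast,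
    ← ENNReal.ofReal_mul hn.le, Real.Gamma_add_one (by positivity),
    Real.rpow_div_two_eq_sqrt _ Real.pi_pos.le, Real.rpow_natCast]
  congr 1
  field_simp

theorem lintegral_Ici_pow_mul_rpow_sub {n : ℕ} {s c ν : ℝ} (hs : 0 ≤ s) (hsc : s < c)
    (hν : n + 1 < ν) :
    ∫⁻ y in Ici c, ENNReal.ofReal (y ^ n) * ENNReal.ofReal ((y - s) ^ (-ν)) =
      ENNReal.ofReal (∑ i ∈ Finset.range (n + 1),
        n.choose i * s ^ (n - i) / ((ν - 1 - i) * (c - s) ^ (ν - 1 - i))) := by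
  have ha : 0 < c - s := sub_pos.2 hsc
  have hexp : ∀ i ∈ Finset.range (n + 1), (i : ℝ) - ν < -1 := fun i hi => by
    have : (i : ℝ) + 1 ≤ n + 1 := by exact_mod_cast Finset.mem_range.1 hi
    linarith
  have hbinom : ∀ t ∈ Ioi (c - s), ENNReal.ofReal ((t + s) ^ n) * ENNReal.ofReal (t ^ (-ν)) =
      ENNReal.ofReal
        (∑ i ∈ Finset.range (n + 1), n.choose i * s ^ (n - i) * t ^ ((i : ℝ) - ν)) := by
    intro t (ht : c - s < t)
    have ht0 : 0 < t := ha.trans ht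
    rw [← ENNReal.ofReal_mul (by positivity), add_pow, Finset.sum_mul]
    refine congrArg _ (Finset.sum_congr rfl fun i _ => ?_)
    rw [sub_eq_add_neg, Real.rpow_add ht0, Real.rpow_natCast]
    ring
  have hint : ∀ i ∈ Finset.range (n + 1),
      IntegrableOn (fun t : ℝ => n.choose i * s ^ (n - i) * t ^ ((i : ℝ) - ν)) (Ioi (c - s)) :=
    fun i hi => (integrableOn_Ioi_rpow_of_lt (hexp i hi) ha).const_mul _
  calc ∫⁻ y in Ici c, ENNReal.ofReal (y ^ n) * ENNReal.ofReal ((y - s) ^ (-ν))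
      = ∫⁻ y in Ioi c, ENNReal.ofReal (y ^ n) * ENNReal.ofReal ((y - s) ^ (-ν)) :=
        setLIntegral_congr Ioi_ae_eq_Ici.symm
    _ = ∫⁻ t in Ioi (c - s), ENNReal.ofReal ((t + s) ^ n) * ENNReal.ofReal (t ^ (-ν)) := by
        rw [← (measurePreserving_add_right volume s).setLIntegral_comp_preimage_emb
          (measurableEmbedding_addRight s), preimage_add_const_Ioi]
        simp only [add_sub_cancel_right]
    _ = ENNReal.ofReal (∫ t in Ioi (c - s),
          ∑ i ∈ Finset.range (n + 1), n.choose i * s ^ (n - i) * t ^ ((i : ℝ) - ν)) := by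
        rw [setLIntegral_congr_fun measurableSet_Ioi hbinom,
          ofReal_integral_eq_lintegral_ofReal (integrable_finsetSum _ hint)]
        filter_upwards [ae_restrict_mem measurableSet_Ioi] with t (ht : c - s < t)
        have ht0 : 0 < t := ha.trans ht
        exact Finset.sum_nonneg fun i _ => by positivity
    _ = _ := by
        rw [integral_finsetSum _ hint]
        refine congrArg _ (Finset.sum_congr rfl fun i hi => ?_)
        have hνi : 0 < ν - 1 - i := by linarith [hexp i hi]
        rw [integral_const_mul, integral_Ioi_rpow_of_lt (hexp i hi) ha,
          show (i : ℝ) - ν + 1 = -(ν - 1 - i) by ring, Real.rpow_neg ha.le]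
        field_simp

theorem summable_and_tsum_le_of_tsum_ofReal_le {α : Type*} {f : α → ℝ} {B : ℝ}
    (hf : ∀ i, 0 ≤ f i) (hB : 0 ≤ B) (h : ∑' i, ENNReal.ofReal (f i) ≤ ENNReal.ofReal B) :
    Summable f ∧ ∑' i, f i ≤ B := by
  have hsum : Summable f :=
    (ENNReal.summable_toReal (ne_top_of_le_ne_top ofReal_ne_top h)).congr
      fun i => toReal_ofReal (hf i)
  refine ⟨hsum, ?_⟩
  rwa [← ENNReal.ofReal_le_ofReal_iff hB, ENNReal.ofReal_tsum_of_nonneg hf hsum]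

section LatticeCube

variable {ι : Type*}

noncomputable def latticePoint (h : ι → ℤ) : EuclideanSpace ℝ ι :=
  WithLp.toLp 2 fun i => (h i : ℝ)

@[simp]
theorem latticePoint_apply (h : ι → ℤ) (i : ι) : latticePoint h i = h i := rfl

def latticeCube (h : ι → ℤ) : Set (EuclideanSpace ℝ ι) :=
  WithLp.ofLp ⁻¹' univ.pi fun i => Ico (h i : ℝ) (h i + 1)

theorem measurableSet_latticeCube [Fintype ι] (h : ι → ℤ) : MeasurableSet (latticeCube h) :=
  (PiLp.volume_preserving_ofLp ι).measurable (MeasurableSet.univ_pi fun _ => measurableSet_Ico)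

theorem volume_latticeCube [Fintype ι] (h : ι → ℤ) : volume (latticeCube h) = 1 := by
  rw [latticeCube, (PiLp.volume_preserving_ofLp ι).measure_preimage
    (MeasurableSet.univ_pi fun _ => measurableSet_Ico).nullMeasurableSet]
  simp [volume_pi_pi, Real.volume_Ico]

theorem pairwise_disjoint_latticeCube :
    Pairwise (Function.onFun Disjoint (latticeCube : (ι → ℤ) → Set (EuclideanSpace ℝ ι))) := by
  refine fun h h' hne => Set.disjoint_left.2 fun x hx hx' => hne (funext fun i => ?_)
  simp only [latticeCube, mem_preimage, mem_univ_pi] at hx hx'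
  rw [← Int.floor_eq_iff.2 (hx i), Int.floor_eq_iff.2 (hx' i)]

theorem dist_latticePoint_le [Fintype ι] {h : ι → ℤ} {x : EuclideanSpace ℝ ι}
    (hx : x ∈ latticeCube h) :
    dist x (latticePoint h) ≤ √(Fintype.card ι) := by
  simp only [latticeCube, mem_preimage, mem_univ_pi, mem_Ico] at hx
  rw [EuclideanSpace.dist_eq]
  refine Real.sqrt_le_sqrt ?_
  calc ∑ i, dist (x i) (latticePoint h i) ^ 2 ≤ ∑ _i : ι, (1 : ℝ) := by
        refine Finset.sum_le_sum fun i _ => pow_le_one₀ dist_nonneg ?_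
        rw [latticePoint_apply, Real.dist_eq, abs_le]
        constructor <;> linarith [hx i]
    _ = Fintype.card ι := by simp

theorem tsum_le_lintegral_of_le_on_latticeCube [Fintype ι] {s : Set (ι → ℤ)}
    {a : (ι → ℤ) → ℝ≥0∞} {g : EuclideanSpace ℝ ι → ℝ≥0∞}
    (hle : ∀ h ∈ s, ∀ x ∈ latticeCube h, a h ≤ g x) :
    ∑' h : s, a h ≤ ∫⁻ x, g x :=
  calc ∑' h : s, a h = ∑' h : s, ∫⁻ _ in latticeCube (h : ι → ℤ), a h := by
        simp only [setLIntegral_const, volume_latticeCube, mul_one]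
    _ ≤ ∑' h : s, ∫⁻ x in latticeCube h, g x :=
        ENNReal.tsum_le_tsum fun h => setLIntegral_mono' (measurableSet_latticeCube _) (hle h h.2)
    _ = ∫⁻ x in ⋃ h : s, latticeCube h, g x :=
        (lintegral_iUnion (fun _ => measurableSet_latticeCube _)
          (pairwise_disjoint_latticeCube.comp_of_injective Subtype.val_injective) _).symm
    _ ≤ ∫⁻ x, g x := setLIntegral_le_lintegral _ _

end LatticeCube

theorem ofReal_rpow_neg_norm_le_indicator {E : Type*} [SeminormedAddCommGroup E] {x y : E}
    {s ρ ν : ℝ} (hν : 0 ≤ ν) (hsρ : 2 * s < ρ) (hy : ρ ≤ ‖y‖) (hxy : dist x y ≤ s) :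
    ENNReal.ofReal (‖y‖ ^ (-ν)) ≤
      {x | ρ - s ≤ ‖x‖}.indicator (fun x => ENNReal.ofReal ((‖x‖ - s) ^ (-ν))) x := by
  rw [dist_eq_norm] at hxy
  have hyx : ‖y‖ - s ≤ ‖x‖ := by linarith [norm_sub_norm_le y x, norm_sub_rev x y]
  have hxy' : ‖x‖ - s ≤ ‖y‖ := by linarith [norm_sub_norm_le x y]
  have hmem : x ∈ {x | ρ - s ≤ ‖x‖} := show ρ - s ≤ ‖x‖ by linarith
  rw [indicator_of_mem hmem]
  exact ENNReal.ofReal_le_ofReal (Real.rpow_le_rpow_of_nonpos (by linarith) hxy' (by linarith))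

theorem EuclideanSpace.lintegral_indicator_rpow_neg_norm_sub (ι : Type*) [Fintype ι]
    [Nonempty ι] {s ρ ν : ℝ} (hs : 0 ≤ s) (hsρ : 2 * s < ρ) (hν : (Fintype.card ι : ℝ) < ν) :
    ∫⁻ x : EuclideanSpace ℝ ι,
        {x | ρ - s ≤ ‖x‖}.indicator (fun x => ENNReal.ofReal ((‖x‖ - s) ^ (-ν))) x =
      ENNReal.ofReal (2 * Real.pi ^ ((Fintype.card ι : ℝ) / 2) /
          Real.Gamma ((Fintype.card ι : ℝ) / 2) *
        ∑ i ∈ Finset.range (Fintype.card ι),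
          (Fintype.card ι - 1).choose i * s ^ (Fintype.card ι - 1 - i) /
            ((ν - 1 - i) * (ρ - 2 * s) ^ (ν - 1 - i))) := by
  have hn : 1 ≤ Fintype.card ι := Fintype.card_pos
  rw [lintegral_indicator (measurableSet_le measurable_const measurable_norm),
    setLIntegral_fun_norm_addHaar_Ici _ (by linarith)
      (g := fun r => ENNReal.ofReal ((r - s) ^ (-ν))) (by fun_prop),
    EuclideanSpace.volume_toSphere_univ, finrank_euclideanSpace,
    lintegral_Ici_pow_mul_rpow_sub hs (by linarith) (by rw [Nat.cast_pred hn]; linarith),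
    ← ENNReal.ofReal_mul (by positivity), Nat.sub_add_cancel hn,
    show ρ - s - s = ρ - 2 * s by ring]

theorem latNorm_eq_norm_latticePoint {d : ℕ} (h : Fin d → ℤ) :
    latNorm h = ‖latticePoint h‖ := by
  simp [latNorm, latticePoint, EuclideanSpace.norm_eq, sq_abs]

theorem lattice_tail_sum_le (d : ℕ) (hd : 2 ≤ d) (ν ρ : ℝ) (hν : (d : ℝ) < ν)
    (hρ : 2 * Real.sqrt d < ρ) :
    Summable (fun h : {h : Fin d → ℤ // ρ ≤ latNorm (h : Fin d → ℤ)} =>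
      1 / latNorm (h : Fin d → ℤ) ^ ν) ∧
    ∑' h : {h : Fin d → ℤ // ρ ≤ latNorm (h : Fin d → ℤ)},
        1 / latNorm (h : Fin d → ℤ) ^ ν ≤
      (2 * Real.pi ^ ((d : ℝ) / 2) / Real.Gamma ((d : ℝ) / 2)) *
        ∑ i ∈ Finset.range d, (Nat.choose (d - 1) i : ℝ) *
          (d : ℝ) ^ (((d : ℝ) - 1 - (i : ℝ)) / 2) /
            ((ν - 1 - (i : ℝ)) * (ρ - 2 * Real.sqrt d) ^ (ν - 1 - (i : ℝ))) := by
  have : Nonempty (Fin d) := ⟨⟨0, by omega⟩⟩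
  have hcube : ∀ h ∈ {h : Fin d → ℤ | ρ ≤ latNorm h}, ∀ x ∈ latticeCube h,
      ENNReal.ofReal (1 / latNorm h ^ ν) ≤ {x | ρ - √d ≤ ‖x‖}.indicator
        (fun x => ENNReal.ofReal ((‖x‖ - √d) ^ (-ν))) x := fun h (hh : ρ ≤ latNorm h) x hx => by
    rw [latNorm_eq_norm_latticePoint] at hh ⊢
    rw [one_div, ← Real.rpow_neg (norm_nonneg _)]
    refine ofReal_rpow_neg_norm_le_indicator ((Nat.cast_nonneg d).trans hν.le) hρ hh ?_
    simpa using dist_latticePoint_le hx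
  have hradial := EuclideanSpace.lintegral_indicator_rpow_neg_norm_sub (Fin d)
    (Real.sqrt_nonneg d) hρ (by simpa using hν)
  have hsqrt : ∀ i ∈ Finset.range d,
      √(d : ℝ) ^ (d - 1 - i) = (d : ℝ) ^ (((d : ℝ) - 1 - i) / 2) := fun i hi => by
    rw [Real.rpow_div_two_eq_sqrt _ (Nat.cast_nonneg d), ← Real.rpow_natCast,
      Nat.cast_sub (Nat.le_sub_one_of_lt (Finset.mem_range.1 hi)), Nat.cast_pred (by omega)]
  simp only [Fintype.card_fin] at hradial
  rw [Finset.sum_congr rfl fun i hi => by rw [hsqrt i hi]] at hradial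
  refine summable_and_tsum_le_of_tsum_ofReal_le
    (fun h => one_div_nonneg.2 (Real.rpow_nonneg (Real.sqrt_nonneg _) _)) ?_
    ((tsum_le_lintegral_of_le_on_latticeCube hcube).trans hradial.le)
  refine mul_nonneg (by positivity) (Finset.sum_nonneg fun i hi => ?_)
  have : (i : ℝ) + 1 ≤ d := by exact_mod_cast Finset.mem_range.1 hi
  have : 0 < ν - 1 - i := by linarith
  positivity
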